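/- Let ξ1, ξ2 > 0, n1, n2 ≥ 2, N = n1 + n2, w1 = ξ2/ξ1, and λ ∈ ℝ. For 1 ≤ j ≤ N let M_{1:j} denote the top-left j × j principal submatrix of M and set ψ̃_j(λ) = ξ2^j · det(M_{1:j} − λ·I), and let Ũ_j = U_j((2 − λξ2)/2) where U_j is the Chebyshev polynomial of the second kind. Then ψ̃_N(λ) = ψ̃_{n1}(λ)·Ũ_{n2} − w1·ψ̃_{n1−1}(λ)·Ũ_{n2−1}. -/
import Mathlib


open Matrix Real Polynomial

/-- The `(n1+n2) × (n1+n2)` two-segment tridiagonal matrix: row `i` (0-based) has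
diagonal entry `2/ξ1` and nonzero off-diagonal entries `-1/ξ1` when `i < n1`, and
diagonal entry `2/ξ2` and nonzero off-diagonal entries `-1/ξ2` when `n1 ≤ i`. -/
noncomputable def twoSegMatrix (ξ1 ξ2 : ℝ) (n1 n2 : ℕ) :
    Matrix (Fin (n1 + n2)) (Fin (n1 + n2)) ℝ :=
  Matrix.of fun i j =>
    if (i : ℕ) = (j : ℕ) then 2 / (if (i : ℕ) < n1 then ξ1 else ξ2)
    else if (i : ℕ) + 1 = (j : ℕ) ∨ (j : ℕ) + 1 = (i : ℕ) then
      -1 / (if (i : ℕ) < n1 then ξ1 else ξ2)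
    else 0

/-- `ξ^j · det(A_{1:j} − λ·I)` where `A_{1:j}` is the top-left `j × j` principal
submatrix of `A` (returns `0` for out-of-range `j`). -/
noncomputable def psiTop {N : ℕ} (A : Matrix (Fin N) (Fin N) ℝ) (ξ lam : ℝ) (j : ℕ) : ℝ :=
  if h : j ≤ N then
    ξ ^ j *
      (A.submatrix (Fin.castLE h) (Fin.castLE h) -
        lam • (1 : Matrix (Fin j) (Fin j) ℝ)).det
  else 0

lemma det_step {n : ℕ} (A : Matrix (Fin (n+2)) (Fin (n+2)) ℝ)
    (hrow : ∀ j : Fin (n+2), (j:ℕ) < n → A (Fin.last (n+1)) j = 0)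
    (hcol : ∀ i : Fin (n+2), (i:ℕ) < n → A i (Fin.last (n+1)) = 0) :
    A.det = A (Fin.last (n+1)) (Fin.last (n+1)) *
        (A.submatrix (Fin.castLE (by omega : n+1 ≤ n+2)) (Fin.castLE (by omega))).det
      - A (Fin.last (n+1)) ⟨n, by omega⟩ * A ⟨n, by omega⟩ (Fin.last (n+1)) *
        (A.submatrix (Fin.castLE (by omega : n ≤ n+2)) (Fin.castLE (by omega))).det := by
  rw [det_succ_row A (Fin.last (n+1))]
  rw [Fin.sum_univ_castSucc, Fin.sum_univ_castSucc]
  have h0 : ∀ j : Fin n, (-1:ℝ) ^ ((Fin.last (n+1) : ℕ) + ((j.castSucc.castSucc : Fin (n+2)) : ℕ))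
      * A (Fin.last (n+1)) j.castSucc.castSucc *
      ((A.submatrix (Fin.last (n+1)).succAbove (j.castSucc.castSucc).succAbove).det) = 0 := by
    intro j
    rw [hrow _ (by simp)]
    ring
  rw [Finset.sum_eq_zero (fun j _ => h0 j), zero_add]
  have e1 : A.submatrix (Fin.last (n+1)).succAbove (Fin.last (n+1)).succAbove
      = A.submatrix (Fin.castLE (by omega : n+1 ≤ n+2)) (Fin.castLE (by omega)) := by
    rw [Fin.succAbove_last]
    rfl
  have key : (A.submatrix (Fin.last (n+1)).succAbove ((Fin.last n).castSucc).succAbove).det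
      = A ⟨n, by omega⟩ (Fin.last (n+1)) *
        (A.submatrix (Fin.castLE (by omega : n ≤ n+2)) (Fin.castLE (by omega))).det := by
    rw [det_succ_column _ (Fin.last n), Fin.sum_univ_castSucc]
    have hgl : ((Fin.last n).castSucc).succAbove (Fin.last n) = Fin.last (n+1) := by
      rw [Fin.succAbove_of_le_castSucc _ _ (le_refl _)]
      rfl
    have h0' : ∀ i : Fin n, (-1:ℝ) ^ (((i.castSucc : Fin (n+1)) : ℕ) + ((Fin.last n) : ℕ))
        * (A.submatrix (Fin.last (n+1)).succAbove ((Fin.last n).castSucc).succAbove) i.castSucc (Fin.last n)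
        * ((A.submatrix (Fin.last (n+1)).succAbove ((Fin.last n).castSucc).succAbove).submatrix
            (i.castSucc).succAbove (Fin.last n).succAbove).det = 0 := by
      intro i
      rw [submatrix_apply, Fin.succAbove_last, hgl, hcol _ (by simp)]
      ring
    rw [Finset.sum_eq_zero (fun i _ => h0' i), zero_add]
    rw [submatrix_apply, Fin.succAbove_last, hgl]
    have hminor : ((A.submatrix Fin.castSucc ((Fin.last n).castSucc).succAbove).submatrix
        (Fin.last n).succAbove (Fin.last n).succAbove)
        = A.submatrix (Fin.castLE (by omega : n ≤ n+2)) (Fin.castLE (by omega)) := by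
      ext i j
      simp only [submatrix_apply, Fin.succAbove_last]
      rw [Fin.succAbove_of_castSucc_lt _ _ (by simp [Fin.lt_def])]
      rfl
    rw [hminor]
    have : ((Fin.last n).castSucc : Fin (n+2)) = ⟨n, by omega⟩ := rfl
    rw [this]
    simp only [Fin.val_last]
    rw [show (-1:ℝ)^(n+n) = 1 by rw [← two_mul, pow_mul]; simp, one_mul]
  rw [e1, key]
  have hc : ((Fin.last n).castSucc : Fin (n+2)) = ⟨n, by omega⟩ := rfl
  rw [hc]
  have hv : ((Fin.last (n+1) : Fin (n+2)) : ℕ) = n+1 := rfl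
  have hv2 : ((⟨n, by omega⟩ : Fin (n+2)) : ℕ) = n := rfl
  rw [hv, hv2]
  have s1 : (-1:ℝ) ^ ((n+1) + n) = -1 := by
    rw [show (n+1)+n = 2*n+1 by ring, pow_succ, pow_mul]; simp
  have s2 : (-1:ℝ) ^ ((n+1) + (n+1)) = 1 := by
    rw [show (n+1)+(n+1) = 2*(n+1) by ring, pow_mul]; simp
  rw [s1, s2]
  ring

lemma one_submatrix_castLE {a b : ℕ} (h : a ≤ b) :
    (1 : Matrix (Fin b) (Fin b) ℝ).submatrix (Fin.castLE h) (Fin.castLE h) = 1 := by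
  ext i k
  simp [Matrix.one_apply, Fin.ext_iff]

lemma psi_rec (ξ1 ξ2 lam : ℝ) (n1 n2 : ℕ) (j : ℕ) (hj : j + 2 ≤ n1 + n2) :
    psiTop (twoSegMatrix ξ1 ξ2 n1 n2) ξ2 lam (j+2) =
      ((2 / (if j+1 < n1 then ξ1 else ξ2) - lam) * ξ2) *
        psiTop (twoSegMatrix ξ1 ξ2 n1 n2) ξ2 lam (j+1) -
      ((1 / (if j+1 < n1 then ξ1 else ξ2)) * (1 / (if j < n1 then ξ1 else ξ2)) * ξ2^2) *
        psiTop (twoSegMatrix ξ1 ξ2 n1 n2) ξ2 lam j := by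
  have hj1 : j + 1 ≤ n1 + n2 := by omega
  have hj0 : j ≤ n1 + n2 := by omega
  simp only [psiTop, dif_pos hj, dif_pos hj1, dif_pos hj0]
  set A := twoSegMatrix ξ1 ξ2 n1 n2 with hA
  set B := A.submatrix (Fin.castLE hj) (Fin.castLE hj) -
      lam • (1 : Matrix (Fin (j+2)) (Fin (j+2)) ℝ) with hB
  have hsub : ∀ (a : ℕ) (h1 : a ≤ j+2) (h2 : a ≤ n1+n2),
      B.submatrix (Fin.castLE h1) (Fin.castLE h1)
        = A.submatrix (Fin.castLE h2) (Fin.castLE h2) -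
          lam • (1 : Matrix (Fin a) (Fin a) ℝ) := by
    intro a h1 h2
    ext i k
    simp only [hB, Matrix.submatrix_apply, Matrix.sub_apply, Matrix.smul_apply,
      Matrix.one_apply, smul_eq_mul]
    have : (Fin.castLE hj (Fin.castLE h1 i)) = Fin.castLE h2 i := rfl
    rw [this, show (Fin.castLE hj (Fin.castLE h1 k)) = Fin.castLE h2 k from rfl]
    rcases eq_or_ne i k with h | h
    · rw [if_pos (by rw [h]), if_pos h]
    · rw [if_neg ((Fin.castLE_injective h1).ne h), if_neg h]
  -- entries of A
  have hAval : ∀ (p q : Fin (n1+n2)), A p q =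
      if (p : ℕ) = (q : ℕ) then 2 / (if (p : ℕ) < n1 then ξ1 else ξ2)
      else if (p : ℕ) + 1 = (q : ℕ) ∨ (q : ℕ) + 1 = (p : ℕ) then
        -1 / (if (p : ℕ) < n1 then ξ1 else ξ2)
      else 0 := fun p q => rfl
  have hrow : ∀ k : Fin (j+2), (k:ℕ) < j → B (Fin.last (j+1)) k = 0 := by
    intro k hk
    simp only [hB, Matrix.sub_apply, Matrix.submatrix_apply, Matrix.smul_apply,
      Matrix.one_apply, smul_eq_mul]
    rw [hAval]
    have h1 : ((Fin.castLE hj (Fin.last (j+1)) : Fin (n1+n2)) : ℕ) = j+1 := rfl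
    have h2 : ((Fin.castLE hj k : Fin (n1+n2)) : ℕ) = (k : ℕ) := rfl
    rw [h1, h2]
    rw [if_neg (show ¬((j+1 : ℕ) = (k:ℕ)) by omega),
      if_neg (show ¬((j+1:ℕ)+1 = (k:ℕ) ∨ (k:ℕ)+1 = j+1) by omega),
      if_neg (show ¬(Fin.last (j+1) = k) by simp [Fin.ext_iff]; omega)]
    ring
  have hcol : ∀ k : Fin (j+2), (k:ℕ) < j → B k (Fin.last (j+1)) = 0 := by
    intro k hk
    simp only [hB, Matrix.sub_apply, Matrix.submatrix_apply, Matrix.smul_apply,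
      Matrix.one_apply, smul_eq_mul]
    rw [hAval]
    have h1 : ((Fin.castLE hj (Fin.last (j+1)) : Fin (n1+n2)) : ℕ) = j+1 := rfl
    have h2 : ((Fin.castLE hj k : Fin (n1+n2)) : ℕ) = (k : ℕ) := rfl
    rw [h2, h1]
    rw [if_neg (show ¬((k : ℕ) = (j+1:ℕ)) by omega),
      if_neg (show ¬((k:ℕ)+1 = (j+1:ℕ) ∨ (j+1:ℕ)+1 = (k:ℕ)) by omega),
      if_neg (show ¬(k = Fin.last (j+1)) by simp [Fin.ext_iff]; omega)]
    ring
  have hstep := det_step B hrow hcol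
  rw [hsub (j+1) (by omega) hj1, hsub j (by omega) hj0] at hstep
  rw [hstep]
  -- compute entries
  have hll : B (Fin.last (j+1)) (Fin.last (j+1)) = 2 / (if j+1 < n1 then ξ1 else ξ2) - lam := by
    simp only [hB, Matrix.sub_apply, Matrix.submatrix_apply, Matrix.smul_apply,
      Matrix.one_apply, smul_eq_mul]
    rw [hAval]
    rw [show ((Fin.castLE hj (Fin.last (j+1)) : Fin (n1+n2)) : ℕ) = j+1 from rfl]
    rw [if_pos (show ((j+1:ℕ)) = (j+1:ℕ) from rfl),
      ]
    simp
  have hln : B (Fin.last (j+1)) ⟨j, by omega⟩ = -1 / (if j+1 < n1 then ξ1 else ξ2) := by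
    simp only [hB, Matrix.sub_apply, Matrix.submatrix_apply, Matrix.smul_apply,
      Matrix.one_apply, smul_eq_mul]
    rw [hAval]
    rw [show ((Fin.castLE hj (Fin.last (j+1)) : Fin (n1+n2)) : ℕ) = j+1 from rfl,
      show ((Fin.castLE hj (⟨j, by omega⟩ : Fin (j+2)) : Fin (n1+n2)) : ℕ) = j from rfl]
    rw [if_neg (show ¬((j+1:ℕ) = (j:ℕ)) by omega),
      if_pos (show (j+1:ℕ)+1 = (j:ℕ) ∨ (j:ℕ)+1 = (j+1:ℕ) from Or.inr rfl),
      if_neg (show ¬(Fin.last (j+1) = ⟨j, by omega⟩) by simp [Fin.ext_iff])]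
    ring
  have hnl : B ⟨j, by omega⟩ (Fin.last (j+1)) = -1 / (if j < n1 then ξ1 else ξ2) := by
    simp only [hB, Matrix.sub_apply, Matrix.submatrix_apply, Matrix.smul_apply,
      Matrix.one_apply, smul_eq_mul]
    rw [hAval]
    rw [show ((Fin.castLE hj (Fin.last (j+1)) : Fin (n1+n2)) : ℕ) = j+1 from rfl,
      show ((Fin.castLE hj (⟨j, by omega⟩ : Fin (j+2)) : Fin (n1+n2)) : ℕ) = j from rfl]
    rw [if_neg (show ¬((j:ℕ) = (j+1:ℕ)) by omega),
      if_pos (show (j:ℕ)+1 = (j+1:ℕ) ∨ (j+1:ℕ)+1 = (j:ℕ) from Or.inl rfl),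
      if_neg (show ¬((⟨j, by omega⟩ : Fin (j+2)) = Fin.last (j+1)) by simp [Fin.ext_iff])]
    ring
  rw [hll, hln, hnl]
  ring

theorem twoSeg_laplace (ξ1 ξ2 : ℝ) (hξ1 : 0 < ξ1) (hξ2 : 0 < ξ2)
    (n1 n2 : ℕ) (hn1 : 2 ≤ n1) (hn2 : 2 ≤ n2) (lam : ℝ) :
    psiTop (twoSegMatrix ξ1 ξ2 n1 n2) ξ2 lam (n1 + n2) =
      psiTop (twoSegMatrix ξ1 ξ2 n1 n2) ξ2 lam n1 *
        (Polynomial.Chebyshev.U ℝ (n2 : ℤ)).eval ((2 - lam * ξ2) / 2) -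
      (ξ2 / ξ1) * psiTop (twoSegMatrix ξ1 ξ2 n1 n2) ξ2 lam (n1 - 1) *
        (Polynomial.Chebyshev.U ℝ ((n2 : ℤ) - 1)).eval ((2 - lam * ξ2) / 2) := by
  have hξ1' : ξ1 ≠ 0 := ne_of_gt hξ1
  have hξ2' : ξ2 ≠ 0 := ne_of_gt hξ2
  obtain ⟨m, rfl⟩ : ∃ m, n1 = m + 1 := ⟨n1 - 1, by omega⟩
  set f : ℕ → ℝ := fun k => psiTop (twoSegMatrix ξ1 ξ2 (m+1) n2) ξ2 lam k with hf
  set x : ℝ := (2 - lam * ξ2) / 2 with hx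
  have h2x : 2 * x = 2 - lam * ξ2 := by rw [hx]; ring
  have c1 : (2 / ξ2 - lam) * ξ2 = 2 - lam * ξ2 := by field_simp
  have c2 : (1/ξ2) * (1/ξ1) * ξ2^2 = ξ2/ξ1 := by field_simp
  have c3 : (1/ξ2) * (1/ξ2) * ξ2^2 = 1 := by field_simp
  have base1 : f (m+2) = (2 - lam*ξ2) * f (m+1) - (ξ2/ξ1) * f m := by
    have h := psi_rec ξ1 ξ2 lam (m+1) n2 m (by omega)
    rw [if_neg (show ¬(m+1 < m+1) by omega), if_pos (show m < m+1 by omega), c1, c2] at h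
    exact h
  have rec2 : ∀ k, m+1+k+2 ≤ m+1+n2 →
      f (m+1+k+2) = (2 - lam*ξ2) * f (m+1+k+1) - f (m+1+k) := by
    intro k hk
    have h := psi_rec ξ1 ξ2 lam (m+1) n2 (m+1+k) hk
    rw [if_neg (show ¬(m+1+k+1 < m+1) by omega), if_neg (show ¬(m+1+k < m+1) by omega),
      c1, c3, one_mul] at h
    exact h
  have urec : ∀ t : ℤ, (Polynomial.Chebyshev.U ℝ (t+2)).eval x =
      (2 - lam*ξ2) * (Polynomial.Chebyshev.U ℝ (t+1)).eval x -
        (Polynomial.Chebyshev.U ℝ t).eval x := by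
    intro t
    rw [Polynomial.Chebyshev.U_add_two]
    simp only [Polynomial.eval_sub, Polynomial.eval_mul, Polynomial.eval_ofNat,
      Polynomial.eval_X]
    rw [← h2x]
  have main : ∀ k : ℕ, k + 1 ≤ n2 →
      (f (m+1+k) = f (m+1) * (Polynomial.Chebyshev.U ℝ (k:ℤ)).eval x -
        (ξ2/ξ1) * f m * (Polynomial.Chebyshev.U ℝ ((k:ℤ)-1)).eval x) ∧
      (f (m+1+(k+1)) = f (m+1) * (Polynomial.Chebyshev.U ℝ ((k:ℤ)+1)).eval x -
        (ξ2/ξ1) * f m * (Polynomial.Chebyshev.U ℝ ((k:ℤ))).eval x) := by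
    intro k
    induction k with
    | zero =>
      intro _
      constructor
      · simp [Polynomial.Chebyshev.U_zero, Polynomial.Chebyshev.U_neg_one]
      · have : m + 1 + (0 + 1) = m + 2 := by omega
        rw [this, base1]
        simp only [Nat.cast_zero, zero_add, Polynomial.Chebyshev.U_one,
          Polynomial.Chebyshev.U_zero]
        simp only [Polynomial.eval_mul, Polynomial.eval_X, Polynomial.eval_ofNat,
          Polynomial.eval_one]
        rw [← h2x]
        ring
    | succ k ih =>
      intro hk
      obtain ⟨ih1, ih2⟩ := ih (by omega)
      refine ⟨?_, ?_⟩
      · rw [show (((k:ℕ)+1 : ℕ) : ℤ) - 1 = (k:ℤ) by push_cast; ring,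
          show (((k:ℕ)+1 : ℕ) : ℤ) = (k:ℤ)+1 by push_cast; ring]
        exact ih2
      have hr := rec2 k (by omega)
      have e1 := urec (k:ℤ)
      have e2 := urec ((k:ℤ)-1)
      rw [show (k:ℤ)-1+2 = (k:ℤ)+1 by ring, show (k:ℤ)-1+1 = (k:ℤ) by ring] at e2
      have hidx : m+1+(k+1+1) = m+1+k+2 := by omega
      have hidx2 : m+1+k+1 = m+1+(k+1) := by omega
      rw [hidx, hr, hidx2, ih2, show m+1+k = m+1+(k) from rfl, ih1]
      push_cast
      rw [show (k:ℤ)+1+1 = (k:ℤ)+2 by ring, e1, e2]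
      ring
  obtain ⟨p, rfl⟩ : ∃ p, n2 = p + 1 := ⟨n2 - 1, by omega⟩
  have h := (main p (by omega)).2
  have : m + 1 - 1 = m := by omega
  rw [this]
  have hidx : m + 1 + (p + 1) = m + 1 + (p + 1) := rfl
  push_cast at h ⊢
  rw [show (p:ℤ)+1-1 = (p:ℤ) by ring]
  exact h
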